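/- For t > 0, (e^{-t}/√(4πt)) ∫_0^∞ exp(-x²/(4t)) (sinh x / (cosh x - 1 + a)) dx → 0 as t → 0⁺, for any constant a > 0. -/

import Mathlib

open Real Filter MeasureTheory Set Topology

/-!
Since `sinh x ≤ x cosh x` and `cosh x ≤ (1 + a⁻¹) (cosh x - 1 + a)`, the integrand's second factor is
at most `(1 + a⁻¹) x` on `(0, ∞)`. Against the Gaussian `exp (-x² / 4t)` the first moment is `2t`, so
the integral is `O(t)` and the whole expression is `O(√t)`.
-/

theorem Real.sinh_le_mul_cosh {x : ℝ} (hx : 0 ≤ x) : sinh x ≤ x * cosh x := by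
  have hderiv (y : ℝ) : HasDerivAt (fun z ↦ z * cosh z - sinh z) (y * sinh y) y :=
    (((hasDerivAt_id' y).mul (hasDerivAt_cosh y)).sub (hasDerivAt_sinh y)).congr_deriv
      (by ring)
  have hmono := monotone_of_hasDerivAt_nonneg hderiv fun y ↦ by
    rcases le_total 0 y with hy | hy
    · exact mul_nonneg hy (sinh_nonneg_iff.2 hy)
    · exact mul_nonneg_of_nonpos_of_nonpos hy (sinh_nonpos_iff.2 hy)
  simpa using hmono hx

theorem Real.sinh_div_cosh_sub_one_add_le {a x : ℝ} (ha : 0 < a) (hx : 0 ≤ x) :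
    sinh x / (cosh x - 1 + a) ≤ (1 + a⁻¹) * x := by
  have hc := one_le_cosh x
  rw [div_le_iff₀ (by linarith)]
  calc sinh x ≤ x * cosh x := sinh_le_mul_cosh hx
    _ ≤ x * ((1 + a⁻¹) * (cosh x - 1 + a)) := by
        gcongr
        field_simp
        nlinarith
    _ = (1 + a⁻¹) * x * (cosh x - 1 + a) := by ring

theorem integral_Ioi_mul_exp_neg_mul_sq {b : ℝ} (hb : 0 < b) :
    ∫ x in Ioi (0 : ℝ), x * exp (-b * x ^ 2) = (2 * b)⁻¹ := by
  have h := integral_mul_cexp_neg_mul_sq (b := (b : ℂ)) (by simpa using hb)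
  rw [← Complex.ofReal_inj, ← integral_complex_ofReal]
  push_cast
  simpa using h

theorem setIntegral_exp_neg_sq_div_mul_le {g : ℝ → ℝ} {C t : ℝ} (ht : 0 < t)
    (hg : AEStronglyMeasurable g (volume.restrict (Ioi 0)))
    (hg0 : ∀ x > 0, 0 ≤ g x) (hgC : ∀ x > 0, g x ≤ C * x) :
    ∫ x in Ioi (0 : ℝ), exp (-x ^ 2 / (4 * t)) * g x ≤ 2 * C * t := by
  have hexp (x : ℝ) : exp (-x ^ 2 / (4 * t)) = exp (-(4 * t)⁻¹ * x ^ 2) := by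
    ring_nf
  have hmaj : IntegrableOn (fun x ↦ C * (x * exp (-(4 * t)⁻¹ * x ^ 2))) (Ioi 0) :=
    ((integrable_mul_exp_neg_mul_sq (by positivity)).const_mul C).integrableOn
  have hle : ∀ x ∈ Ioi (0 : ℝ),
      exp (-x ^ 2 / (4 * t)) * g x ≤ C * (x * exp (-(4 * t)⁻¹ * x ^ 2)) := fun x hx ↦ by
    rw [hexp]
    nlinarith [hgC x hx, exp_pos (-(4 * t)⁻¹ * x ^ 2)]
  have hint : IntegrableOn (fun x ↦ exp (-x ^ 2 / (4 * t)) * g x) (Ioi 0) := by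
    have hgauss : Continuous fun x : ℝ ↦ exp (-x ^ 2 / (4 * t)) := by fun_prop
    refine hmaj.mono' (hgauss.aestronglyMeasurable.mul hg) ?_
    filter_upwards [ae_restrict_mem measurableSet_Ioi] with x hx
    rw [Real.norm_of_nonneg (mul_nonneg (exp_pos _).le (hg0 x hx))]
    exact hle x hx
  calc ∫ x in Ioi (0 : ℝ), exp (-x ^ 2 / (4 * t)) * g x
      ≤ ∫ x in Ioi (0 : ℝ), C * (x * exp (-(4 * t)⁻¹ * x ^ 2)) :=
        setIntegral_mono_on hint hmaj measurableSet_Ioi hle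
    _ = 2 * C * t := by
        rw [integral_const_mul, integral_Ioi_mul_exp_neg_mul_sq (by positivity)]
        field_simp
        ring

theorem tendsto_exp_neg_div_sqrt_mul_of_le_mul {F : ℝ → ℝ} {C : ℝ}
    (hF0 : ∀ t > 0, 0 ≤ F t) (hFC : ∀ t > 0, F t ≤ C * t) :
    Tendsto (fun t ↦ exp (-t) / √(4 * π * t) * F t) (𝓝[>] 0) (𝓝 0) := by
  have hmaj : Tendsto (fun t ↦ C / √(4 * π) * (exp (-t) * √t)) (𝓝[>] 0) (𝓝 0) :=
    (Continuous.tendsto' (by fun_prop) 0 0 (by simp)).mono_left nhdsWithin_le_nhds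
  refine squeeze_zero' ?_ ?_ hmaj
  · filter_upwards [self_mem_nhdsWithin] with t ht
    exact mul_nonneg (by positivity) (hF0 t ht)
  · filter_upwards [self_mem_nhdsWithin] with t (ht : 0 < t)
    calc exp (-t) / √(4 * π * t) * F t ≤ exp (-t) / √(4 * π * t) * (C * t) := by
          gcongr
          exact hFC t ht
      _ = C / √(4 * π) * (exp (-t) * √t) := by
          rw [sqrt_mul (by positivity)]
          field_simp
          rw [sq_sqrt ht.le]

theorem cuspidal_elliptic_small_time (a : ℝ) (ha : 0 < a) :
    Tendsto
      (fun t : ℝ =>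
        Real.exp (-t) / Real.sqrt (4 * π * t) *
          ∫ x in Set.Ioi (0 : ℝ),
            Real.exp (-x ^ 2 / (4 * t)) * (Real.sinh x / (Real.cosh x - 1 + a)))
      (nhdsWithin 0 (Set.Ioi 0)) (nhds 0) := by
  have hden (x : ℝ) : 0 < cosh x - 1 + a := by linarith [one_le_cosh x]
  have hnonneg (x : ℝ) (hx : 0 < x) : 0 ≤ sinh x / (cosh x - 1 + a) :=
    div_nonneg (sinh_nonneg_iff.2 hx.le) (hden x).le
  refine tendsto_exp_neg_div_sqrt_mul_of_le_mul (C := 2 * (1 + a⁻¹)) (fun t _ ↦ ?_) (fun t ht ↦ ?_)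
  · exact setIntegral_nonneg measurableSet_Ioi fun x hx ↦
      mul_nonneg (exp_pos _).le (hnonneg x hx)
  · exact setIntegral_exp_neg_sq_div_mul_le ht
      (continuous_sinh.div (by fun_prop) fun x ↦ (hden x).ne').aestronglyMeasurable
      hnonneg fun x hx ↦ sinh_div_cosh_sub_one_add_le ha hx.le
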